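/- If the tokenization of a string S decomposes as F(S) = A ++ B (a concatenation of two lists of tokens), then F(S) = F(join A) ++ F(join B); that is, tokenizing the two pieces of S obtained by cutting at any token boundary of F(S) and concatenating the results reproduces F(S). -/

import Mathlib

variable {α : Type*} [DecidableEq α]

/-- The longest nonempty prefix of `S` belonging to the vocabulary `V`
(falling back to the first character of `S` if no such prefix exists). -/
noncomputable def firstTok (V : Finset (List α)) (S : List α) : List α :=
  ((V.filter (fun w => w ≠ [] ∧ w <+: S)).toList.argmax List.length).getD (S.take 1)

lemma firstTok_ne_nil (V : Finset (List α)) (a : α) (s : List α) :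
    firstTok V (a :: s) ≠ [] := by
  unfold firstTok
  cases h : ((V.filter (fun w => w ≠ [] ∧ w <+: (a :: s))).toList.argmax List.length) with
  | none => simp
  | some w =>
    have hw : w ∈ (V.filter (fun w => w ≠ [] ∧ w <+: (a :: s))).toList :=
      List.argmax_mem h
    rw [Finset.mem_toList, Finset.mem_filter] at hw
    simpa using hw.2.1

/-- Greedy (WordPiece-style) tokenization with vocabulary `V`. -/
noncomputable def F (V : Finset (List α)) : List α → List (List α)
  | [] => []
  | a :: s =>
    firstTok V (a :: s) :: F V ((a :: s).drop (firstTok V (a :: s)).length)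
termination_by S => S.length
decreasing_by
  have h := firstTok_ne_nil V a s
  have hpos : 0 < (firstTok V (a :: s)).length := List.length_pos_iff.mpr h
  simp only [List.length_drop, List.length_cons]
  omega

/-! The tokens after a boundary are, by the recursion defining `F`, the tokenization of what
remains of `S`. For the tokens before it, the point is that the greedy first token `t` of `S`
is also the greedy first token of every prefix `S'` of `S` that still contains `t`: a longer
vocabulary prefix of `S'` would be one of `S`, and `t` itself is a candidate in `S'`. -/

theorem firstTok_prefix (V : Finset (List α)) (S : List α) : firstTok V S <+: S := by
  unfold firstTok
  cases h : (V.filter (fun w => w ≠ [] ∧ w <+: S)).toList.argmax List.length with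
  | none => exact List.take_prefix 1 S
  | some u => simpa using (Finset.mem_filter.mp (Finset.mem_toList.mp (List.argmax_mem h))).2.2

theorem length_le_length_firstTok {V : Finset (List α)} {S w : List α} (hw : w ∈ V)
    (hw₀ : w ≠ []) (hwS : w <+: S) : w.length ≤ (firstTok V S).length := by
  have hmem : w ∈ (V.filter (fun w => w ≠ [] ∧ w <+: S)).toList := by simp [hw, hw₀, hwS]
  unfold firstTok
  cases h : (V.filter (fun w => w ≠ [] ∧ w <+: S)).toList.argmax List.length with
  | none => simp [List.argmax_eq_none.mp h] at hmem
  | some u => exact List.le_of_mem_argmax hmem h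

theorem firstTok_mem {V : Finset (List α)} (hsingle : ∀ a : α, [a] ∈ V) {S : List α}
    (hS : S ≠ []) : firstTok V S ∈ V := by
  obtain ⟨a, s, rfl⟩ := List.exists_cons_of_ne_nil hS
  unfold firstTok
  cases h : (V.filter (fun w => w ≠ [] ∧ w <+: a :: s)).toList.argmax List.length with
  | none =>
    have hmem : [a] ∈ (V.filter (fun w => w ≠ [] ∧ w <+: a :: s)).toList := by
      simp [hsingle a]
    simp [List.argmax_eq_none.mp h] at hmem
  | some u => simpa using (Finset.mem_filter.mp (Finset.mem_toList.mp (List.argmax_mem h))).1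

theorem firstTok_ne_nil_of_ne_nil (V : Finset (List α)) {S : List α} (hS : S ≠ []) :
    firstTok V S ≠ [] := by
  obtain ⟨a, s, rfl⟩ := List.exists_cons_of_ne_nil hS
  exact firstTok_ne_nil V a s

theorem F_of_ne_nil (V : Finset (List α)) {S : List α} (hS : S ≠ []) :
    F V S = firstTok V S :: F V (S.drop (firstTok V S).length) := by
  obtain ⟨a, s, rfl⟩ := List.exists_cons_of_ne_nil hS
  rw [F]

theorem flatten_F (V : Finset (List α)) (S : List α) : (F V S).flatten = S := by
  induction S using F.induct V with
  | case1 => rw [F, List.flatten_nil]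
  | case2 a s ih =>
    rw [F, List.flatten_cons, ih, List.prefix_iff_eq_append.mp (firstTok_prefix V _)]

theorem firstTok_eq_of_prefix {V : Finset (List α)} (hsingle : ∀ a : α, [a] ∈ V)
    {S S' : List α} (hS : S ≠ []) (htS' : firstTok V S <+: S') (hS'S : S' <+: S) :
    firstTok V S' = firstTok V S := by
  have ht₀ : firstTok V S ≠ [] := firstTok_ne_nil_of_ne_nil V hS
  have hS' : S' ≠ [] := fun h => ht₀ (List.prefix_nil.mp (h ▸ htS'))
  have hle : (firstTok V S').length ≤ (firstTok V S).length :=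
    length_le_length_firstTok (firstTok_mem hsingle hS') (firstTok_ne_nil_of_ne_nil V hS')
      ((firstTok_prefix V S').trans hS'S)
  have hge : (firstTok V S).length ≤ (firstTok V S').length :=
    length_le_length_firstTok (firstTok_mem hsingle hS) ht₀ htS'
  exact (List.prefix_of_prefix_length_le (firstTok_prefix V S') htS' hle).eq_of_length
    (le_antisymm hle hge)

theorem F_eq_append_right {V : Finset (List α)} {S : List α} {A B : List (List α)}
    (h : F V S = A ++ B) : F V B.flatten = B := by
  induction A generalizing S with
  | nil => rw [List.nil_append] at h; rw [← h, flatten_F]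
  | cons t A ih =>
    have hS : S ≠ [] := by rintro rfl; simp [F] at h
    rw [F_of_ne_nil V hS, List.cons_append, List.cons.injEq] at h
    exact ih h.2

theorem F_eq_append_left {V : Finset (List α)} (hsingle : ∀ a : α, [a] ∈ V) {S : List α}
    {A B : List (List α)} (h : F V S = A ++ B) : F V A.flatten = A := by
  induction A generalizing S with
  | nil => rw [List.flatten_nil, F]
  | cons t A ih =>
    have hS : S ≠ [] := by rintro rfl; simp [F] at h
    rw [F_of_ne_nil V hS, List.cons_append, List.cons.injEq] at h
    obtain ⟨rfl, hrest⟩ := h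
    have hsplit : S = firstTok V S ++ (A.flatten ++ B.flatten) := by
      rw [← List.flatten_append, ← hrest, flatten_F,
        List.prefix_iff_eq_append.mp (firstTok_prefix V S)]
    have hprefix : firstTok V S ++ A.flatten <+: S :=
      ⟨B.flatten, by rw [List.append_assoc, ← hsplit]⟩
    have hfirst := firstTok_eq_of_prefix hsingle hS (List.prefix_append _ _) hprefix
    have hne : firstTok V S ++ A.flatten ≠ [] := by
      simp [firstTok_ne_nil_of_ne_nil V hS]
    rw [List.flatten_cons, F_of_ne_nil V hne, hfirst, List.drop_left, ih hrest]

theorem tokenize_split_at_boundary_general (V : Finset (List α))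
    (hsingle : ∀ a : α, [a] ∈ V)
    (S : List α) (A B : List (List α)) (h : F V S = A ++ B) :
    F V S = F V A.flatten ++ F V B.flatten := by
  rw [F_eq_append_left hsingle h, F_eq_append_right h, h]

/-- cutting `S` at any token boundary of `F V S` and tokenizing
the two pieces separately reproduces `F V S`. -/
theorem tokenize_split_at_boundary (V : Finset (List α))
    (hne : ∀ w ∈ V, w ≠ []) (hsingle : ∀ a : α, [a] ∈ V)
    (S : List α) (A B : List (List α)) (h : F V S = A ++ B) :
    F V S = F V A.flatten ++ F V B.flatten :=
  tokenize_split_at_boundary_general V hsingle S A B h
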